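/- Let A = (a_{ij})_{i,j∈ℤ} be an ℕ-valued ℤ×ℤ matrix with a_{ij} = a_{i+n,j+n}, finitely many nonzero entries in each equivalence class of rows, and Σ_{1≤i≤n, j∈ℤ} a_{ij} = r. Let y_A be the shortest representative of the double coset in the extended affine symmetric group determined by A. Then ℓ(y_A) = Σ a_{ij} a_{kl}, where the sum is over 1 ≤ i ≤ n, i < k, j > l. -/

import Mathlib

/-- `w : ℤ ≃ ℤ` commutes with translation by `r`. -/
def PeriodicPerm (r : ℕ) (w : ℤ ≃ ℤ) : Prop := ∀ i : ℤ, w (i + r) = w i + r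

/-- The length (inversion count) `ℓ(w) = |{(i,j) : 1 ≤ i ≤ r, i < j, w(i) > w(j)}|`. -/
noncomputable def affLen (r : ℕ) (w : ℤ ≃ ℤ) : ℕ :=
  {p : ℤ × ℤ | 1 ≤ p.1 ∧ p.1 ≤ (r : ℤ) ∧ p.1 < p.2 ∧ w p.2 < w p.1}.ncard

/-!
Write `R_k = (cl (k-1), cl k]` and `C_l = (cm (l-1), cm l]`. If `w` has matrix `A`, the set
`C_l ∩ w⁻¹ R_k` has `a_{kl}` elements. Every pair `x ∈ C_l ∩ w⁻¹ R_k`, `x' ∈ C_j ∩ w⁻¹ R_i` with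
`l < j` and `i < k` is an inversion of `w`, and counting these pairs block by block gives the
right-hand side, once the normalisation `1 ≤ x ≤ r` in `ℓ` has been moved to `1 ≤ i ≤ n` by
translating pairs by multiples of `(r, r)`. So `ℓ(w)` is at least the right-hand side.

Conversely, cut each `C_l` into consecutive pieces of sizes `a_{kl}` (increasing in `k`) and each
`R_k` into consecutive pieces of sizes `a_{kl}` (increasing in `l`), and let `w₀` translate the
piece `(k, l)` of `C_l` onto the piece `(k, l)` of `R_k`. Then `w₀` is periodic with matrix `A`,
increasing on every `C_l`, and `w₀⁻¹` is increasing on every `R_k`; hence its inversions are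
exactly the pairs counted above, and minimality of `y` gives the reverse inequality.
-/

open Function Set

section FundamentalDomain

variable {α : Type*} [AddCommGroup α] {v : α} {N : ℤ} {a b : α → ℤ}

lemma map_sub_zsmul_of_map_add (ha : ∀ x, a (x + v) = a x + N) (x : α) (m : ℤ) :
    a (x - m • v) = a x - m • N :=
  AddConstMapClass.map_sub_zsmul (⟨a, ha⟩ : AddConstMap α ℤ v N) x m

lemma toIocDiv_map_sub_zsmul (hN : 0 < N) (ha : ∀ x, a (x + v) = a x + N) {c : ℤ} {x : α}
    (hx : a x ∈ Ioc c (c + N)) (m : ℤ) : toIocDiv hN c (a (x - m • v)) = -m := by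
  rw [map_sub_zsmul_of_map_add ha, toIocDiv_sub_zsmul,
    (toIocDiv_eq_iff hN).2 (by rwa [zero_smul, sub_zero]), zero_sub]

lemma bijOn_sub_toIocDiv_zsmul (hN : 0 < N) (ha : ∀ x, a (x + v) = a x + N)
    (hb : ∀ x, b (x + v) = b x + N) (c d : ℤ) :
    BijOn (fun x => x - toIocDiv hN d (b x) • v) (a ⁻¹' Ioc c (c + N)) (b ⁻¹' Ioc d (d + N)) := by
  have hmem : ∀ {f : α → ℤ}, (∀ x, f (x + v) = f x + N) → ∀ c x,
      x - toIocDiv hN c (f x) • v ∈ f ⁻¹' Ioc c (c + N) := fun {f} hf c x => by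
    simpa [map_sub_zsmul_of_map_add hf] using sub_toIocDiv_zsmul_mem_Ioc hN c (f x)
  refine InvOn.bijOn ⟨fun x hx => ?_, fun x hx => ?_⟩ (fun x _ => hmem hb d x)
    (fun x _ => hmem ha c x)
  · simp only [toIocDiv_map_sub_zsmul hN ha hx, neg_smul, sub_neg_eq_add, sub_add_cancel]
  · simp only [toIocDiv_map_sub_zsmul hN hb hx, neg_smul, sub_neg_eq_add, sub_add_cancel]

theorem finsum_mem_preimage_Ioc_eq {M : Type*} [AddCommMonoid M] {f : α → M} (hf : Periodic f v)
    (hN : 0 < N) (ha : ∀ x, a (x + v) = a x + N) (hb : ∀ x, b (x + v) = b x + N) (c d : ℤ) :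
    ∑ᶠ x ∈ a ⁻¹' Ioc c (c + N), f x = ∑ᶠ x ∈ b ⁻¹' Ioc d (d + N), f x :=
  finsum_mem_eq_of_bijOn _ (bijOn_sub_toIocDiv_zsmul hN ha hb c d)
    fun _ _ => (hf.sub_zsmul_eq _).symm

theorem ncard_preimage_Ioc_inter_eq {S : Set α} (hS : ∀ x, x + v ∈ S ↔ x ∈ S)
    (hN : 0 < N) (ha : ∀ x, a (x + v) = a x + N) (hb : ∀ x, b (x + v) = b x + N) (c d : ℤ) :
    (a ⁻¹' Ioc c (c + N) ∩ S).ncard = (b ⁻¹' Ioc d (d + N) ∩ S).ncard := by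
  have hf : Periodic (S.indicator (1 : α → ℕ)) v := fun x => by
    by_cases hx : x ∈ S <;> simp [hx, hS]
  have key := finsum_mem_preimage_Ioc_eq hf hN ha hb c d
  simp only [finsum_mem_def, indicator_indicator] at key
  simpa only [← finsum_mem_def, Pi.one_apply, finsum_one] using key

end FundamentalDomain

lemma finsum_mem_fst_preimage {α β M : Type*} [AddCommMonoid M] {f : α × β → M} (s : Finset α)
    (hf : ∀ a ∈ s, (support fun b => f (a, b)).Finite) :
    ∑ᶠ p ∈ Prod.fst ⁻¹' (s : Set α), f p = ∑ a ∈ s, ∑ᶠ b, f (a, b) := by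
  have hfin : HasFiniteSupport ((Prod.fst ⁻¹' (s : Set α)).indicator f) := by
    refine (s.finite_toSet.biUnion fun a ha => (finite_singleton a).prod (hf a ha)).subset ?_
    rintro ⟨a, b⟩ hp
    rw [mem_support, indicator_apply_ne_zero] at hp
    exact mem_biUnion hp.1 ⟨rfl, hp.2⟩
  rw [finsum_mem_def, finsum_curry _ hfin, ← finsum_mem_coe_finset, finsum_mem_def]
  refine finsum_congr fun a => ?_
  by_cases ha : a ∈ s <;> simp [indicator, ha]

lemma finsum_mem_snd_preimage {α β M : Type*} [AddCommMonoid M] {f : α × β → M} (s : Finset β)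
    (hf : ∀ b ∈ s, (support fun a => f (a, b)).Finite) :
    ∑ᶠ p ∈ Prod.snd ⁻¹' (s : Set β), f p = ∑ b ∈ s, ∑ᶠ a, f (a, b) := by
  refine .trans ?_ (finsum_mem_fst_preimage (f := f ∘ Prod.swap) s hf)
  exact finsum_mem_eq_of_bijOn Prod.swap
    ⟨fun _ hp => hp, Prod.swap_injective.injOn, fun p hp => ⟨p.swap, hp, p.swap_swap⟩⟩
    fun _ _ => rfl

lemma ncard_eq_finsum_ncard_fiber {α β : Type*} {s : Set α} (hs : s.Finite) (φ : α → β)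
    {t : Set β} (hφ : MapsTo φ s t) : s.ncard = ∑ᶠ b ∈ t, {x ∈ s | φ x = b}.ncard := by
  have hs' : s = ⋃ b ∈ φ '' s, {x ∈ s | φ x = b} := by
    ext x
    simp only [mem_iUnion, mem_sep_iff, mem_image]
    exact ⟨fun hx => ⟨φ x, ⟨x, hx, rfl⟩, hx, rfl⟩, fun ⟨_, _, hx, _⟩ => hx⟩
  conv_lhs => rw [hs']
  rw [(hs.image φ).ncard_biUnion (fun _ _ => hs.subset (sep_subset _ _))
    fun b _ b' _ hbb' => disjoint_left.2 fun x hx hx' => hbb' (hx.2.symm.trans hx'.2)]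
  refine finsum_mem_inter_support_eq _ _ _ ?_
  ext b
  simp only [mem_inter_iff, mem_support, ne_eq, and_congr_left_iff]
  intro hb
  exact ⟨fun ⟨x, hx, hxb⟩ => hxb ▸ hφ hx, fun _ =>
    (fiber_ncard_ne_zero_iff_mem_image (hs := hs)).1 hb⟩

def block (c : ℤ → ℤ) (i : ℤ) : Set ℤ := Ioc (c (i - 1)) (c i)

noncomputable def blockOf (c : ℤ → ℤ) (x : ℤ) : ℤ := sInf {i | x ≤ c i}

structure IsBlockBoundary (c : ℤ → ℤ) : Prop where
  mono : Monotone c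
  cover : ∀ x, ∃ i, x ∈ block c i

section Blocks

variable {c : ℤ → ℤ} {i j x y : ℤ}

lemma blockOf_eq (hc : Monotone c) (hx : x ∈ block c i) : blockOf c x = i := by
  refine IsLeast.csInf_eq ⟨hx.2, fun j hj => ?_⟩
  by_contra! hji
  exact (hx.1.trans_le hj).not_ge (hc (by omega))

lemma lt_of_mem_block (hc : Monotone c) (hx : x ∈ block c i) (hy : y ∈ block c j) (hij : i < j) :
    x < y :=
  hx.2.trans_lt ((hc (by omega : i ≤ j - 1)).trans_lt hy.1)

lemma exists_mem_block (hc : Monotone c) {a b : ℤ} (ha : c a < x) (hb : x ≤ c b) :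
    ∃ i, x ∈ block c i := by
  obtain ⟨i, hi, hmin⟩ := Int.exists_least_of_bdd (P := fun i => x ≤ c i)
    ⟨a + 1, fun j hj => by by_contra! h; exact (ha.trans_le hj).not_ge (hc (by omega))⟩ ⟨b, hb⟩
  exact ⟨i, not_le.1 fun h => (hmin _ h).not_gt (by omega), hi⟩

lemma monotone_of_eq_sub_one_add {f : ℤ → ℕ} (hc : ∀ i, c i = c (i - 1) + f i) : Monotone c :=
  monotone_int_of_le_succ fun i => by
    have := hc (i + 1)
    rw [add_sub_cancel_right] at this
    omega

lemma IsBlockBoundary.of_add {n r : ℤ} (hc : Monotone c) (hper : ∀ i, c (i + n) = c i + r)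
    (hr : 0 < r) : IsBlockBoundary c := by
  let c' : AddConstMap ℤ ℤ n r := ⟨c, hper⟩
  have hmul : ∀ m : ℤ, c (m * n) = c 0 + m * r := fun m => by
    have h := AddConstMapClass.map_add_zsmul c' 0 m
    simp only [zero_add, smul_eq_mul] at h
    exact h
  refine ⟨hc, fun x => exists_mem_block hc (a := (-|x - c 0| - 1) * n) (b := |x - c 0| * n) ?_ ?_⟩
  · rw [hmul]; nlinarith [le_abs_self (c 0 - x), abs_sub_comm x (c 0), abs_nonneg (x - c 0)]
  · rw [hmul]; nlinarith [le_abs_self (x - c 0), abs_nonneg (x - c 0)]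

namespace IsBlockBoundary

variable (hc : IsBlockBoundary c)
include hc

lemma mem_block_blockOf (x : ℤ) : x ∈ block c (blockOf c x) := by
  obtain ⟨i, hi⟩ := hc.cover x
  rwa [blockOf_eq hc.mono hi]

lemma blockOf_eq_iff : blockOf c x = i ↔ x ∈ block c i :=
  ⟨fun h => h ▸ hc.mem_block_blockOf x, blockOf_eq hc.mono⟩

lemma lt_of_blockOf_lt (h : blockOf c x < blockOf c y) : x < y :=
  lt_of_mem_block hc.mono (hc.mem_block_blockOf x) (hc.mem_block_blockOf y) h

lemma blockOf_mono : Monotone (blockOf c) := fun _ _ hxy =>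
  not_lt.1 fun h => (hc.lt_of_blockOf_lt h).not_ge hxy

lemma mem_Ioc_iff {a b : ℤ} : x ∈ Ioc (c a) (c b) ↔ blockOf c x ∈ Ioc a b := by
  have hx := hc.mem_block_blockOf x
  constructor
  · rintro ⟨ha, hb⟩
    exact ⟨not_le.1 fun h => (ha.trans_le hx.2).not_ge (hc.mono h),
      not_lt.1 fun h => (hx.1.trans_le hb).not_ge (hc.mono (by omega))⟩
  · rintro ⟨ha, hb⟩
    exact ⟨(hc.mono (by omega)).trans_lt hx.1, hx.2.trans (hc.mono hb)⟩

end IsBlockBoundary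

lemma add_eq_add_sum_of_periodic {f : ℤ → ℕ} {n : ℕ} (hc : ∀ i, c i = c (i - 1) + f i)
    (hf : Periodic f n) (i : ℤ) : c (i + n) = c i + ∑ t ∈ Finset.Icc (1 : ℤ) n, f t := by
  have hstep : ∀ i, c (i + 1 + n) - c (i + 1) = c (i + n) - c i := fun i => by
    have h1 := hc (i + 1 + n)
    have h2 := hc (i + 1)
    rw [show i + 1 + n - 1 = i + n by ring, hf] at h1
    rw [add_sub_cancel_right] at h2
    omega
  have hconst : c (i + n) - c i = c n - c 0 := by
    induction i using Int.induction_on with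
    | zero => simp
    | succ k ih => rw [hstep, ih]
    | pred k ih => rw [← ih, ← hstep (-k - 1), sub_add_cancel]
  have hsum : ∀ m : ℕ, c m = c 0 + ∑ t ∈ Finset.Icc (1 : ℤ) m, f t := by
    intro m
    induction m with
    | zero => simp
    | succ m ih =>
      rw [Nat.cast_succ, ← Finset.insert_Icc_right_eq_Icc_add_one (by omega),
        Finset.sum_insert (by simp), hc, add_sub_cancel_right, ih]
      push_cast; ring
  rw [hsum n] at hconst
  omega

end Blocks

section PartialSum

noncomputable def partialSum (f : ℤ → ℕ) (k : ℤ) : ℕ := ∑ᶠ t ∈ Iic k, f t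

variable {f : ℤ → ℕ}

lemma partialSum_eq_add (hf : (support f).Finite) (k : ℤ) :
    partialSum f k = partialSum f (k - 1) + f k := by
  have : Iic k = insert k (Iic (k - 1)) := by ext; simp; omega
  rw [partialSum, this, finsum_mem_insert' _ (by simp) (hf.subset inter_subset_right), add_comm]
  rfl

lemma monotone_partialSum (hf : (support f).Finite) : Monotone (partialSum f) :=
  monotone_int_of_le_succ fun k => by rw [partialSum_eq_add hf (k + 1), add_sub_cancel_right]; omega

lemma exists_partialSum_eq_zero (hf : (support f).Finite) : ∃ a, partialSum f a = 0 := by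
  obtain ⟨m, hm⟩ := hf.bddBelow
  refine ⟨m - 1, finsum_mem_eq_zero_of_forall_eq_zero fun t ht => ?_⟩
  by_contra h
  have := hm h
  simp only [mem_Iic] at ht
  omega

lemma partialSum_eq_finsum {k : ℤ} (hk : ∀ t ∈ support f, t ≤ k) :
    partialSum f k = ∑ᶠ t, f t := by
  refine (finsum_mem_inter_support_eq f _ univ ?_).trans (finsum_mem_univ f)
  rw [univ_inter, inter_eq_right]
  exact hk

lemma exists_partialSum_eq_finsum (hf : (support f).Finite) : ∃ b, partialSum f b = ∑ᶠ t, f t :=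
  let ⟨M, hM⟩ := hf.bddAbove
  ⟨M, partialSum_eq_finsum fun _ ht => hM ht⟩

lemma partialSum_le_finsum (hf : (support f).Finite) (k : ℤ) : partialSum f k ≤ ∑ᶠ t, f t := by
  obtain ⟨M, hM⟩ := hf.bddAbove
  rw [← partialSum_eq_finsum (k := max k M) fun t ht => (hM ht).trans (le_max_right k M)]
  exact monotone_partialSum hf (le_max_left k M)

lemma partialSum_comp_add (f : ℤ → ℕ) (n k : ℤ) :
    partialSum (fun t => f (t + n)) k = partialSum f (k + n) :=
  finsum_mem_eq_of_bijOn (· + n)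
    ⟨fun t ht => by simpa using ht, (add_left_injective n).injOn,
      fun t ht => ⟨t - n, by simpa using ht, by simp⟩⟩ fun _ _ => rfl

end PartialSum

section StandardPerm

/-- Block `l` of `c` is cut into consecutive pieces of lengths `B k l`, in increasing order of
`k ∈ ℤ`; `cut B c l k` is the right end of the piece of index `k`. -/
noncomputable def cut (B : ℤ → ℤ → ℕ) (c : ℤ → ℤ) (l k : ℤ) : ℤ :=
  c (l - 1) + partialSum (fun k' => B k' l) k

def piece (B : ℤ → ℤ → ℕ) (c : ℤ → ℤ) (k l : ℤ) : Set ℤ := block (cut B c l) k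

lemma cut_add {B : ℤ → ℤ → ℕ} {c : ℤ → ℤ} {n r : ℤ} (hB : ∀ i j, B (i + n) (j + n) = B i j)
    (hc : ∀ l, c (l + n) = c l + r) (l k : ℤ) : cut B c (l + n) (k + n) = cut B c l k + r := by
  rw [cut, cut, ← partialSum_comp_add]
  simp only [hB, show l + n - 1 = l - 1 + n by ring, hc]
  ring

structure CumulativeSums (B : ℤ → ℤ → ℕ) (cR cC : ℤ → ℤ) : Prop where
  row_finite : ∀ k, (support (B k)).Finite
  col_finite : ∀ l, (support fun k => B k l).Finite
  row_step : ∀ k, cR k = cR (k - 1) + ∑ᶠ l, B k l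
  col_step : ∀ l, cC l = cC (l - 1) + ∑ᶠ k, B k l
  row_bdry : IsBlockBoundary cR
  col_bdry : IsBlockBoundary cC

/-- Translates the piece `(k, l)` of block `l` of `cC` onto the piece `(l, k)` of block `k` of
`cR` (cut according to `swap B`); its inverse is the same construction for `swap B`. -/
noncomputable def standardPerm (B : ℤ → ℤ → ℕ) (cR cC : ℤ → ℤ) (x : ℤ) : ℤ :=
  let l := blockOf cC x
  let k := blockOf (cut B cC l) x
  x - cut B cC l (k - 1) + cut (swap B) cR k (l - 1)

namespace CumulativeSums

variable {B : ℤ → ℤ → ℕ} {cR cC : ℤ → ℤ} (h : CumulativeSums B cR cC) {k l x : ℤ}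
include h

lemma transpose : CumulativeSums (swap B) cC cR :=
  ⟨h.col_finite, h.row_finite, h.col_step, h.row_step, h.col_bdry, h.row_bdry⟩

lemma cut_eq_add (l k : ℤ) : cut B cC l k = cut B cC l (k - 1) + B k l := by
  simp only [cut, partialSum_eq_add (h.col_finite l) k]
  push_cast; ring

lemma monotone_cut (l : ℤ) : Monotone (cut B cC l) := fun _ _ hk => by
  unfold cut
  gcongr
  exact monotone_partialSum (h.col_finite l) hk

lemma piece_subset_block : piece B cC k l ⊆ block cC l := by
  rintro x ⟨hx₁, hx₂⟩
  have := partialSum_le_finsum (h.col_finite l) k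
  have := h.col_step l
  simp only [cut] at hx₁ hx₂
  exact ⟨by omega, by omega⟩

lemma exists_mem_piece (hx : x ∈ block cC l) : ∃ k, x ∈ piece B cC k l := by
  obtain ⟨a, ha⟩ := exists_partialSum_eq_zero (h.col_finite l)
  obtain ⟨b, hb⟩ := exists_partialSum_eq_finsum (h.col_finite l)
  have := h.col_step l
  refine exists_mem_block (h.monotone_cut l) (a := a) (b := b) ?_ ?_
  · simpa only [cut, ha, Nat.cast_zero, add_zero] using hx.1
  · simpa only [cut, hb, ← this] using hx.2

lemma standardPerm_of_mem_piece (hx : x ∈ piece B cC k l) :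
    standardPerm B cR cC x = x - cut B cC l (k - 1) + cut (swap B) cR k (l - 1) := by
  have hl : blockOf cC x = l := blockOf_eq h.col_bdry.mono (h.piece_subset_block hx)
  simp only [standardPerm, hl, blockOf_eq (h.monotone_cut l) hx]

lemma standardPerm_mem_piece (hx : x ∈ piece B cC k l) :
    standardPerm B cR cC x ∈ piece (swap B) cR l k := by
  have h₁ := h.cut_eq_add l k
  have h₂ := h.transpose.cut_eq_add k l
  obtain ⟨hx₁, hx₂⟩ := hx
  rw [h.standardPerm_of_mem_piece ⟨hx₁, hx₂⟩]
  simp only [swap] at h₂ ⊢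
  exact ⟨by omega, by omega⟩

lemma leftInverse_standardPerm : LeftInverse (standardPerm (swap B) cC cR) (standardPerm B cR cC) :=
  fun x => by
    obtain ⟨k, hk⟩ := h.exists_mem_piece (h.col_bdry.mem_block_blockOf x)
    rw [h.transpose.standardPerm_of_mem_piece (h.standardPerm_mem_piece hk),
      h.standardPerm_of_mem_piece hk]
    ring

noncomputable def equiv : ℤ ≃ ℤ :=
  ⟨standardPerm B cR cC, standardPerm (swap B) cC cR, h.leftInverse_standardPerm,
    h.transpose.leftInverse_standardPerm⟩

lemma mem_block_and_standardPerm_mem_block_iff :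
    x ∈ block cC l ∧ standardPerm B cR cC x ∈ block cR k ↔ x ∈ piece B cC k l := by
  refine ⟨fun ⟨hxl, hxk⟩ => ?_, fun hx =>
    ⟨h.piece_subset_block hx, h.transpose.piece_subset_block (h.standardPerm_mem_piece hx)⟩⟩
  obtain ⟨k', hk'⟩ := h.exists_mem_piece hxl
  have hxk' := h.transpose.piece_subset_block (h.standardPerm_mem_piece hk')
  rwa [(blockOf_eq h.row_bdry.mono hxk).symm.trans (blockOf_eq h.row_bdry.mono hxk')]

lemma ncard_block_inter_image (k l : ℤ) : (block cR k ∩ h.equiv '' block cC l).ncard = B k l := by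
  have : block cR k ∩ h.equiv '' block cC l = h.equiv '' piece B cC k l := by
    ext y
    constructor
    · rintro ⟨hy, x, hx, rfl⟩
      exact ⟨x, h.mem_block_and_standardPerm_mem_block_iff.1 ⟨hx, hy⟩, rfl⟩
    · rintro ⟨x, hx, rfl⟩
      obtain ⟨hxl, hxk⟩ := h.mem_block_and_standardPerm_mem_block_iff.2 hx
      exact ⟨hxk, x, hxl, rfl⟩
  rw [this, ncard_image_of_injective _ h.equiv.injective, piece, block, ← Finset.coe_Ioc,
    ncard_coe_finset, Int.card_Ioc, h.cut_eq_add l k]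
  simp

lemma strictMonoOn_standardPerm (l : ℤ) : StrictMonoOn (standardPerm B cR cC) (block cC l) := by
  intro x hx x' hx' hlt
  obtain ⟨k, hk⟩ := h.exists_mem_piece hx
  obtain ⟨k', hk'⟩ := h.exists_mem_piece hx'
  rcases lt_trichotomy k k' with hkk | rfl | hkk
  · exact lt_of_mem_block h.row_bdry.mono
      (h.transpose.piece_subset_block (h.standardPerm_mem_piece hk))
      (h.transpose.piece_subset_block (h.standardPerm_mem_piece hk')) hkk
  · rw [h.standardPerm_of_mem_piece hk, h.standardPerm_of_mem_piece hk']
    omega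
  · exact absurd hlt (lt_of_mem_block (h.monotone_cut l) hk' hk hkk).not_gt

lemma standardPerm_add {n r : ℤ} (hB : ∀ i j, B (i + n) (j + n) = B i j)
    (hC : ∀ l, cC (l + n) = cC l + r) (hR : ∀ k, cR (k + n) = cR k + r) (x : ℤ) :
    standardPerm B cR cC (x + r) = standardPerm B cR cC x + r := by
  obtain ⟨k, hx⟩ := h.exists_mem_piece (h.col_bdry.mem_block_blockOf x)
  set l := blockOf cC x
  have hsub : ∀ m : ℤ, m + n - 1 = m - 1 + n := fun m => by ring
  have hx' : x + r ∈ piece B cC (k + n) (l + n) := by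
    obtain ⟨hx₁, hx₂⟩ := hx
    simp only [piece, block, mem_Ioc, hsub, cut_add hB hC] at hx₁ hx₂ ⊢
    omega
  rw [h.standardPerm_of_mem_piece hx', h.standardPerm_of_mem_piece hx, hsub, hsub,
    cut_add hB hC, cut_add (B := swap B) (fun i j => hB j i) hR]
  ring

end CumulativeSums

end StandardPerm

section Inversions

def inversions (w : ℤ ≃ ℤ) : Set (ℤ × ℤ) := {p | p.1 < p.2 ∧ w p.2 < w p.1}

def crossings (cR cC : ℤ → ℤ) (w : ℤ ≃ ℤ) : Set (ℤ × ℤ) :=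
  {p | blockOf cC p.1 < blockOf cC p.2 ∧ blockOf cR (w p.2) < blockOf cR (w p.1)}

variable {B : ℤ → ℤ → ℕ} {cR cC : ℤ → ℤ} {w : ℤ ≃ ℤ} {r : ℕ}

lemma crossings_subset_inversions (hR : IsBlockBoundary cR) (hC : IsBlockBoundary cC) :
    crossings cR cC w ⊆ inversions w :=
  fun _ hp => ⟨hC.lt_of_blockOf_lt hp.1, hR.lt_of_blockOf_lt hp.2⟩

lemma inversions_subset_crossings (hR : IsBlockBoundary cR) (hC : IsBlockBoundary cC)
    (hcol : ∀ l, StrictMonoOn w (block cC l)) (hrow : ∀ k, StrictMonoOn w.symm (block cR k)) :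
    inversions w ⊆ crossings cR cC w := by
  rintro ⟨x, y⟩ ⟨hxy, hwyx⟩
  refine ⟨(hC.blockOf_mono hxy.le).lt_of_ne fun h => ?_,
    (hR.blockOf_mono hwyx.le).lt_of_ne fun h => ?_⟩
  · exact hwyx.not_gt (hcol _ (hC.mem_block_blockOf x) (h ▸ hC.mem_block_blockOf y) hxy)
  · have := hrow _ (hR.mem_block_blockOf (w y)) (h ▸ hR.mem_block_blockOf (w x)) hwyx
    simp only [Equiv.symm_apply_apply] at this
    exact hxy.not_gt this

lemma ncard_cell (hR : IsBlockBoundary cR) (hC : IsBlockBoundary cC)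
    (hw : ∀ k l, (block cR k ∩ w '' block cC l).ncard = B k l) (k l : ℤ) :
    {x | blockOf cR (w x) = k ∧ blockOf cC x = l}.ncard = B k l := by
  have : {x | blockOf cR (w x) = k ∧ blockOf cC x = l}
      = w ⁻¹' (block cR k ∩ w '' block cC l) := by
    ext x
    simp only [mem_ofPred_eq, mem_preimage, mem_inter_iff, w.injective.mem_set_image,
      hR.blockOf_eq_iff, hC.blockOf_eq_iff]
  rw [this, ncard_preimage_of_injective_subset_range w.injective (by simp), hw]

noncomputable def crossingSum (B : ℤ → ℤ → ℕ) (P : ℤ → Prop) : ℕ :=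
  ∑ᶠ (i : ℤ) (_ : P i) (k : ℤ) (_ : i < k) (j : ℤ) (l : ℤ) (_ : l < j), B i j * B k l

theorem ncard_crossings_inter (hR : IsBlockBoundary cR) (hC : IsBlockBoundary cC)
    (hw : ∀ k l, (block cR k ∩ w '' block cC l).ncard = B k l) (P : ℤ → Prop)
    (hfin : (crossings cR cC w ∩ {p | P (blockOf cR (w p.2))}).Finite) :
    (crossings cR cC w ∩ {p | P (blockOf cR (w p.2))}).ncard = crossingSum B P := by
  set S := crossings cR cC w ∩ {p | P (blockOf cR (w p.2))}
  -- split `(x, y) ∈ S` by the blocks `i, k, j, l` of `w y, w x, y, x`; the last fibres are products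
  rw [ncard_eq_finsum_ncard_fiber hfin (fun p => blockOf cR (w p.2)) (t := {i | P i})
    fun p hp => hp.2]
  refine finsum_congr fun i => finsum_congr fun hi => ?_
  rw [ncard_eq_finsum_ncard_fiber (hfin.sep _) (fun p => blockOf cR (w p.1)) (t := Ioi i)
    (by intro p hp; exact hp.2 ▸ hp.1.1.2)]
  refine finsum_congr fun k => finsum_congr fun hik => ?_
  rw [ncard_eq_finsum_ncard_fiber ((hfin.sep _).sep _) (fun p => blockOf cC p.2)
    (mapsTo_univ _ _), finsum_mem_univ]
  refine finsum_congr fun j => ?_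
  rw [ncard_eq_finsum_ncard_fiber (((hfin.sep _).sep _).sep _) (fun p => blockOf cC p.1)
    (t := Iio j) (by intro p hp; exact hp.2 ▸ hp.1.1.1.1.1)]
  refine finsum_congr fun l => finsum_congr fun hlj => ?_
  rw [mul_comm, ← ncard_cell hR hC hw, ← ncard_cell hR hC hw, ← ncard_prod]
  congr 1
  ext ⟨x, y⟩
  simp only [S, crossings, mem_inter_iff, mem_ofPred_eq, mem_prod]
  constructor
  · rintro ⟨⟨⟨⟨-, rfl⟩, rfl⟩, rfl⟩, rfl⟩
    exact ⟨⟨rfl, rfl⟩, rfl, rfl⟩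
  · rintro ⟨⟨rfl, rfl⟩, rfl, rfl⟩
    exact ⟨⟨⟨⟨⟨⟨hlj, hik⟩, hi⟩, rfl⟩, rfl⟩, rfl⟩, rfl⟩

namespace PeriodicPerm

variable (hw : PeriodicPerm r w) (hr : 0 < r)
include hw hr

lemma exists_abs_sub_le : ∃ M, ∀ x, |w x - x| ≤ M := by
  have hd : Periodic (fun x => w x - x) r := fun x => by simp only [hw x]; ring
  have hfin : (range fun x => w x - x).Finite := by
    rw [← hd.image_Ioc (by exact_mod_cast hr) 0]
    exact (finite_Ioc _ _).image _
  obtain ⟨M, hM⟩ := hfin.bddAbove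
  obtain ⟨m, hm⟩ := hfin.bddBelow
  exact ⟨max M (-m), fun x => abs_le.2
    ⟨by have := hm (mem_range_self x); omega, by have := hM (mem_range_self x); omega⟩⟩

lemma finite_inter_inversions (d : ℤ) :
    ({p : ℤ × ℤ | w p.2 ∈ Ioc d (d + r)} ∩ inversions w).Finite := by
  obtain ⟨M, hM⟩ := hw.exists_abs_sub_le hr
  refine ((finite_Icc (d - M) (d + r + M)).prod (finite_Icc (d - M) (d + r + M))).subset ?_
  rintro ⟨x, y⟩ ⟨⟨hy₁, hy₂⟩, hxy, hwyx⟩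
  have hx := abs_le.1 (hM x)
  have hy := abs_le.1 (hM y)
  dsimp only at hy₁ hy₂ hxy hwyx
  simp only [mem_prod, mem_Icc]
  omega

lemma affLen_eq_ncard (d : ℤ) :
    affLen r w = ({p : ℤ × ℤ | w p.2 ∈ Ioc d (d + r)} ∩ inversions w).ncard := by
  have h := ncard_preimage_Ioc_inter_eq (S := inversions w) (v := ((r : ℤ), (r : ℤ))) (N := r)
    (fun p => by
      simp only [inversions, mem_ofPred_eq, Prod.fst_add, Prod.snd_add, hw p.1, hw p.2]
      omega)
    (by exact_mod_cast hr) (a := Prod.fst) (fun _ => rfl) (b := fun p => w p.2)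
    (fun p => hw p.2) 0 d
  refine (congrArg ncard ?_).trans h
  ext p
  simp only [inversions, mem_ofPred_eq, mem_inter_iff, mem_preimage, mem_Ioc]
  omega

end PeriodicPerm

end Inversions

section Length

variable {n r : ℕ} {B : ℤ → ℤ → ℕ} {cR cC : ℤ → ℤ} {w : ℤ ≃ ℤ}
  (hR : IsBlockBoundary cR) (hC : IsBlockBoundary cC) (hRn : cR n = cR 0 + r)
  (hw : PeriodicPerm r w) (hr : 0 < r)
  (hwB : ∀ k l, (block cR k ∩ w '' block cC l).ncard = B k l)
include hR hC hRn hw hr hwB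

lemma ncard_inter_crossings :
    ({p : ℤ × ℤ | w p.2 ∈ Ioc (cR 0) (cR 0 + r)} ∩ crossings cR cC w).ncard
      = crossingSum B (fun i => 1 ≤ i ∧ i ≤ n) := by
  have hset : {p : ℤ × ℤ | w p.2 ∈ Ioc (cR 0) (cR 0 + r)} ∩ crossings cR cC w
      = crossings cR cC w ∩ {p | 1 ≤ blockOf cR (w p.2) ∧ blockOf cR (w p.2) ≤ n} := by
    ext p
    simp only [mem_inter_iff, mem_ofPred_eq, ← hRn, hR.mem_Ioc_iff, mem_Ioc]
    constructor <;> rintro ⟨⟨h₁, h₂⟩, h₃⟩ <;> exact ⟨h₃, by omega, h₂⟩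
  have hfin := (hw.finite_inter_inversions hr (cR 0)).subset
    (inter_subset_inter_right _ (crossings_subset_inversions hR hC))
  rw [hset] at hfin ⊢
  exact ncard_crossings_inter hR hC hwB (fun i => 1 ≤ i ∧ i ≤ n) hfin

lemma crossingSum_le_affLen : crossingSum B (fun i => 1 ≤ i ∧ i ≤ n) ≤ affLen r w := by
  rw [hw.affLen_eq_ncard hr (cR 0), ← ncard_inter_crossings hR hC hRn hw hr hwB]
  exact ncard_le_ncard (inter_subset_inter_right _ (crossings_subset_inversions hR hC))
    (hw.finite_inter_inversions hr _)

lemma affLen_eq_crossingSum (hcol : ∀ l, StrictMonoOn w (block cC l))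
    (hrow : ∀ k, StrictMonoOn w.symm (block cR k)) :
    affLen r w = crossingSum B (fun i => 1 ≤ i ∧ i ≤ n) := by
  rw [hw.affLen_eq_ncard hr (cR 0), ← ncard_inter_crossings hR hC hRn hw hr hwB,
    (crossings_subset_inversions hR hC).antisymm (inversions_subset_crossings hR hC hcol hrow)]

end Length

section PeriodicMatrix

variable {n : ℕ} {A : ℤ → ℤ → ℕ} (hA : ∀ i j, A (i + n) (j + n) = A i j)
include hA

lemma periodic_finsum_row : Periodic (fun i => ∑ᶠ j, A i j) n := fun i =>
  (finsum_comp_equiv (Equiv.addRight (n : ℤ)) (f := A (i + n))).symm.trans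
    (finsum_congr fun j => hA i j)

lemma periodic_finsum_col : Periodic (fun j => ∑ᶠ i, A i j) n := fun j =>
  (finsum_comp_equiv (Equiv.addRight (n : ℤ)) (f := fun i => A i (j + n))).symm.trans
    (finsum_congr fun i => hA i j)

lemma sum_finsum_col_eq_sum_finsum_row (hn : 0 < n) (hrow : ∀ i, (support (A i)).Finite)
    (hcol : ∀ j, (support fun i => A i j).Finite) :
    ∑ j ∈ Finset.Icc (1 : ℤ) n, ∑ᶠ i, A i j = ∑ i ∈ Finset.Icc (1 : ℤ) n, ∑ᶠ j, A i j := by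
  have hIoc : Ioc (0 : ℤ) (0 + n) = ↑(Finset.Icc (1 : ℤ) n) := by
    ext; simp only [zero_add, mem_Ioc, Finset.coe_Icc, mem_Icc]; omega
  have h := finsum_mem_preimage_Ioc_eq (f := fun p : ℤ × ℤ => A p.1 p.2)
    (v := ((n : ℤ), (n : ℤ))) (N := n) (fun p => hA p.1 p.2) (by exact_mod_cast hn)
    (a := Prod.snd) (fun _ => rfl) (b := Prod.fst) (fun _ => rfl) 0 0
  rwa [hIoc, finsum_mem_snd_preimage _ fun j _ => hcol j,
    finsum_mem_fst_preimage _ fun i _ => hrow i] at h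

end PeriodicMatrix

theorem stmt8_general (n r : ℕ) (hn : 1 ≤ n) (hr : 1 ≤ r)
    (A : ℤ → ℤ → ℕ)
    (hAper : ∀ i j : ℤ, A (i + n) (j + n) = A i j)
    (hrow : ∀ i : ℤ, (Function.support (A i)).Finite)
    (hcol : ∀ j : ℤ, (Function.support (fun i => A i j)).Finite)
    (htot : ∑ i ∈ Finset.Icc (1 : ℤ) (n : ℤ), ∑ᶠ j : ℤ, A i j = r)
    (cl cm : ℤ → ℤ)
    (hcl : ∀ i : ℤ, cl i = cl (i - 1) + ∑ᶠ j : ℤ, A i j)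
    (hcm : ∀ j : ℤ, cm j = cm (j - 1) + ∑ᶠ i : ℤ, A i j)
    (y : ℤ ≃ ℤ) (hy : PeriodicPerm r y)
    (hymat : ∀ k l : ℤ,
      (Set.Ioc (cl (k - 1)) (cl k) ∩ (⇑y '' Set.Ioc (cm (l - 1)) (cm l))).ncard = A k l)
    (hymin : ∀ w : ℤ ≃ ℤ, PeriodicPerm r w →
      (∀ k l : ℤ,
        (Set.Ioc (cl (k - 1)) (cl k) ∩ (⇑w '' Set.Ioc (cm (l - 1)) (cm l))).ncard = A k l) →
      affLen r y ≤ affLen r w) :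
    affLen r y
      = ∑ᶠ (i : ℤ) (_ : 1 ≤ i ∧ i ≤ (n : ℤ)) (k : ℤ) (_ : i < k)
          (j : ℤ) (l : ℤ) (_ : l < j), A i j * A k l := by
  have hcl_add : ∀ i, cl (i + n) = cl i + r := fun i => by
    rw [add_eq_add_sum_of_periodic hcl (periodic_finsum_row hAper), htot]
  have hcm_add : ∀ j, cm (j + n) = cm j + r := fun j => by
    rw [add_eq_add_sum_of_periodic hcm (periodic_finsum_col hAper),
      sum_finsum_col_eq_sum_finsum_row hAper hn hrow hcol, htot]
  have hr' : (0 : ℤ) < r := by exact_mod_cast hr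
  have hL := IsBlockBoundary.of_add (monotone_of_eq_sub_one_add hcl) hcl_add hr'
  have hM := IsBlockBoundary.of_add (monotone_of_eq_sub_one_add hcm) hcm_add hr'
  have hln : cl n = cl 0 + r := by simpa using hcl_add 0
  have hA : CumulativeSums A cl cm := ⟨hrow, hcol, hcl, hcm, hL, hM⟩
  have hw₀ : PeriodicPerm r hA.equiv := hA.standardPerm_add hAper hcm_add hcl_add
  refine le_antisymm ?_ (crossingSum_le_affLen hL hM hln hy hr hymat)
  calc affLen r y ≤ affLen r hA.equiv := hymin _ hw₀ hA.ncard_block_inter_image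
    _ = _ := affLen_eq_crossingSum hL hM hln hw₀ hr hA.ncard_block_inter_image
        hA.strictMonoOn_standardPerm hA.transpose.strictMonoOn_standardPerm

/-- Let `A` be an `n`-periodic ℕ-matrix indexed by `ℤ × ℤ` with
finite row/column supports and total sum `r` on a fundamental set of rows.
With `cl`, `cm` the cumulative row/column sum functions (determining the
blocks `R_k^λ = (cl (k-1), cl k]` and `R_l^μ = (cm (l-1), cm l]`), if `y` is
the shortest element of the extended affine symmetric group whose double
coset matrix is `A` (i.e. `|R_k^λ ∩ y R_l^μ| = a_{kl}` and `y` has minimal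
length among all such elements), then
`ℓ(y) = Σ_{1 ≤ i ≤ n, i < k, j > l} a_{ij} a_{kl}`. -/
theorem stmt8 (n r : ℕ) (hn : 1 ≤ n) (hr : 1 ≤ r)
    (A : ℤ → ℤ → ℕ)
    (hAper : ∀ i j : ℤ, A (i + n) (j + n) = A i j)
    (hrow : ∀ i : ℤ, (Function.support (A i)).Finite)
    (hcol : ∀ j : ℤ, (Function.support (fun i => A i j)).Finite)
    (htot : ∑ i ∈ Finset.Icc (1 : ℤ) (n : ℤ), ∑ᶠ j : ℤ, A i j = r)
    (cl cm : ℤ → ℤ)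
    (hcl0 : cl 0 = 0) (hcl : ∀ i : ℤ, cl i = cl (i - 1) + ∑ᶠ j : ℤ, A i j)
    (hcm0 : cm 0 = 0) (hcm : ∀ j : ℤ, cm j = cm (j - 1) + ∑ᶠ i : ℤ, A i j)
    (y : ℤ ≃ ℤ) (hy : PeriodicPerm r y)
    (hymat : ∀ k l : ℤ,
      (Set.Ioc (cl (k - 1)) (cl k) ∩ (⇑y '' Set.Ioc (cm (l - 1)) (cm l))).ncard = A k l)
    (hymin : ∀ w : ℤ ≃ ℤ, PeriodicPerm r w →
      (∀ k l : ℤ,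
        (Set.Ioc (cl (k - 1)) (cl k) ∩ (⇑w '' Set.Ioc (cm (l - 1)) (cm l))).ncard = A k l) →
      affLen r y ≤ affLen r w) :
    affLen r y
      = ∑ᶠ (i : ℤ) (_ : 1 ≤ i ∧ i ≤ (n : ℤ)) (k : ℤ) (_ : i < k)
          (j : ℤ) (l : ℤ) (_ : l < j), A i j * A k l :=
  stmt8_general n r hn hr A hAper hrow hcol htot cl cm hcl hcm y hy hymat hymin
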